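/- arXiv:2112.00887 — 3 statements merged into one kernel-verified Lean document; each statement's English description precedes it below -/
import Mathlib

section
/- Let k be an integer with k ≠ 0 and k ≠ 1, let h : ℝ → ℝ be twice differentiable with h(t) > 0 for all t, and let λ₀, c₀ ∈ ℝ. Suppose that for all t ∈ ℝ: k·(h''(t) − h'(t)) = −λ₀·h(t), and −λ₀·h(t)² − h''(t)·h(t) − (k−1)·h'(t)² + (2k−1)·h(t)·h'(t) − (k−1)·h(t)² = c₀. Then λ₀ = 0 and there exist constants c₁, c₂ ∈ ℝ such that h(t) = c₁·exp(t) + c₂ for all t ∈ ℝ. -/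
/-!
Write `μ = λ₀ / k`, so the first equation reads `h'' = h' - μ h`. Substituting it into the second
equation turns that into `-(k - 1) ((h' - h)² + μ h²) = c₀`, so the energy `(h' - h)² + μ h²` is
constant. Along `h'' = h' - μ h` its derivative is `2 μ h²`, and `h > 0` forces `μ = 0`. Then
`h'' = h'`, whose solutions are `c₁ exp t + c₂`.
-/

open Real

theorem eq_mul_exp_of_deriv_eq_self {f : ℝ → ℝ} (hf : Differentiable ℝ f)
    (hf' : ∀ t, deriv f t = f t) (t : ℝ) : f t = f 0 * exp t := by
  have hconst : ∀ s, HasDerivAt (fun s => f s * exp (-s)) 0 s := by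
    intro s
    refine ((hf s).hasDerivAt.mul (hasDerivAt_neg s).exp).congr_deriv ?_
    rw [hf' s]
    ring
  have := is_const_of_deriv_eq_zero (fun s => (hconst s).differentiableAt)
    (fun s => (hconst s).deriv) t 0
  simp only [neg_zero, exp_zero, mul_one] at this
  rw [← this, mul_assoc, ← exp_add, neg_add_cancel, exp_zero, mul_one]

theorem exists_eq_mul_exp_add_of_deriv_deriv_eq_deriv {h : ℝ → ℝ} (hd1 : Differentiable ℝ h)
    (hd2 : Differentiable ℝ (deriv h)) (hpp : ∀ t, deriv (deriv h) t = deriv h t) :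
    ∃ c₁ c₂ : ℝ, ∀ t, h t = c₁ * exp t + c₂ := by
  have hexp := eq_mul_exp_of_deriv_eq_self hd2 hpp
  have hconst : ∀ s, HasDerivAt (fun s => h s - deriv h 0 * exp s) 0 s := by
    intro s
    have := (hd1 s).hasDerivAt.sub ((hasDerivAt_exp s).const_mul (deriv h 0))
    rwa [← hexp s, sub_self] at this
  refine ⟨deriv h 0, h 0 - deriv h 0, fun t => ?_⟩
  have := is_const_of_deriv_eq_zero (fun s => (hconst s).differentiableAt)
    (fun s => (hconst s).deriv) t 0
  simp only [exp_zero, mul_one] at this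
  linarith

section Energy

variable {h : ℝ → ℝ} (hd1 : Differentiable ℝ h) (hd2 : Differentiable ℝ (deriv h)) {μ : ℝ}
  (hpp : ∀ t, deriv (deriv h) t = deriv h t - μ * h t)
include hd1 hd2 hpp

theorem hasDerivAt_sq_deriv_sub_add_mul_sq (t : ℝ) :
    HasDerivAt (fun t => (deriv h t - h t) ^ 2 + μ * h t ^ 2) (2 * μ * h t ^ 2) t := by
  have H1 := (hd1 t).hasDerivAt
  have H2 := (hd2 t).hasDerivAt
  refine (((H2.sub H1).pow 2).add ((H1.pow 2).const_mul μ)).congr_deriv ?_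
  rw [hpp t, Pi.sub_apply]
  push_cast
  ring

theorem eq_zero_of_sq_deriv_sub_add_mul_sq_eq_const {C t₀ : ℝ}
    (hC : ∀ t, (deriv h t - h t) ^ 2 + μ * h t ^ 2 = C) (ht₀ : h t₀ ≠ 0) : μ = 0 := by
  have hderiv := hasDerivAt_sq_deriv_sub_add_mul_sq hd1 hd2 hpp t₀
  rw [show (fun t => (deriv h t - h t) ^ 2 + μ * h t ^ 2) = fun _ => C from funext hC] at hderiv
  have := hderiv.unique (hasDerivAt_const t₀ C)
  simpa [ht₀] using this

end Energy

/-- For an integer k ∉ {0,1}, h > 0 twice differentiable, if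
k(h'' − h') = −λ₀ h and −λ₀ h² − h'' h − (k−1)(h')² + (2k−1)h h' − (k−1)h² = c₀,
then λ₀ = 0 and h(t) = c₁ exp(t) + c₂. -/
theorem superWarped_einstein_forward_general_k
    (k : ℤ) (hk0 : k ≠ 0) (hk1 : k ≠ 1)
    (h : ℝ → ℝ) (hpos : ∀ t : ℝ, 0 < h t)
    (hd1 : Differentiable ℝ h) (hd2 : Differentiable ℝ (deriv h))
    (lam c₀ : ℝ)
    (heq1 : ∀ t : ℝ, (k : ℝ) * (deriv (deriv h) t - deriv h t) = -lam * h t)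
    (heq2 : ∀ t : ℝ, -lam * h t ^ 2 - deriv (deriv h) t * h t
        - ((k : ℝ) - 1) * deriv h t ^ 2 + (2 * (k : ℝ) - 1) * h t * deriv h t
        - ((k : ℝ) - 1) * h t ^ 2 = c₀) :
    lam = 0 ∧ ∃ c₁ c₂ : ℝ, ∀ t : ℝ, h t = c₁ * Real.exp t + c₂ := by
  have hk0' : (k : ℝ) ≠ 0 := Int.cast_ne_zero.mpr hk0
  have hk1' : (k : ℝ) - 1 ≠ 0 := sub_ne_zero.mpr (by exact_mod_cast hk1)
  have hpp : ∀ t, deriv (deriv h) t = deriv h t - lam / k * h t := fun t => by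
    field_simp
    linarith [heq1 t]
  have henergy : ∀ t, (deriv h t - h t) ^ 2 + lam / k * h t ^ 2 = -c₀ / (k - 1) := fun t => by
    rw [eq_div_iff hk1', ← heq2 t, hpp t]
    field_simp
    ring
  have hμ := eq_zero_of_sq_deriv_sub_add_mul_sq_eq_const hd1 hd2 hpp henergy (hpos 0).ne'
  have hlam : lam = 0 := by simpa [hk0'] using hμ
  refine ⟨hlam, exists_eq_mul_exp_add_of_deriv_deriv_eq_deriv hd1 hd2 fun t => ?_⟩
  simpa [hμ] using hpp t
end

section
/- Let k be an integer, let h : ℝ → ℝ be twice differentiable with h(t) > 0 for all t, and let λ ∈ ℝ. Suppose that for all t ∈ ℝ: k·(h''(t) − h'(t)) = λ·h(t), and 3·h(t) − k·(h(t) − h'(t)) = −λ·h(t). Then k ≠ 0, 1 − 3/k ≥ 0, and there exist ε ∈ {1, −1} and a constant c₁ > 0 such that h(t) = c₁·exp(ε·√(1 − 3/k)·t) for all t ∈ ℝ and (λ + 3)/k = 1 − ε·√(1 − 3/k). -/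
/-! Once `k ≠ 0`, the second equation is the linear first-order ODE `h' = b h` with
`b = (k - λ - 3) / k`, so `h` is an exponential of rate `b`. Then `h'' = b² h`, and the first
equation becomes `k b² = k - 3`, i.e. `|b| = √(1 - 3/k)`; `ε` is the sign of `b`. -/

open Real

theorem eq_mul_exp_of_deriv_eq_mul {f : ℝ → ℝ} {b : ℝ} (hf : Differentiable ℝ f)
    (hderiv : ∀ t, deriv f t = b * f t) (t : ℝ) : f t = f 0 * exp (b * t) := by
  have hconst : ∀ s, HasDerivAt (fun s => f s * exp (-b * s)) 0 s := by
    intro s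
    have hfs : HasDerivAt f (b * f s) s := hderiv s ▸ (hf s).hasDerivAt
    have hexp : HasDerivAt (fun s => exp (-b * s)) (exp (-b * s) * -b) s := by
      simpa [mul_comm] using ((hasDerivAt_id s).const_mul (-b)).exp
    have hzero : b * f s * exp (-b * s) + f s * (exp (-b * s) * -b) = 0 := by ring
    exact hzero ▸ hfs.mul hexp
  have hft : f t * exp (-b * t) = f 0 := by
    simpa using is_const_of_deriv_eq_zero (fun s => (hconst s).differentiableAt)
      (fun s => (hconst s).deriv) t 0
  rw [← hft, mul_assoc, ← exp_add]
  simp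

theorem exists_sign_mul_abs_eq (b : ℝ) : ∃ ε : ℝ, (ε = 1 ∨ ε = -1) ∧ ε * |b| = b := by
  rcases abs_choice b with hb | hb
  · exact ⟨1, Or.inl rfl, by rw [hb, one_mul]⟩
  · exact ⟨-1, Or.inr rfl, by rw [hb, neg_one_mul, neg_neg]⟩

theorem superWarped_R12_ode_solution_general
    (k : ℤ) (h : ℝ → ℝ) (hpos : ∀ t : ℝ, 0 < h t)
    (hd1 : Differentiable ℝ h)
    (lam : ℝ)
    (heq1 : ∀ t : ℝ, (k : ℝ) * (deriv (deriv h) t - deriv h t) = lam * h t)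
    (heq2 : ∀ t : ℝ, 3 * h t - (k : ℝ) * (h t - deriv h t) = -lam * h t) :
    k ≠ 0 ∧ 1 - 3 / (k : ℝ) ≥ 0 ∧
      ∃ ε : ℝ, (ε = 1 ∨ ε = -1) ∧ ∃ c₁ : ℝ, 0 < c₁ ∧
        (∀ t : ℝ, h t = c₁ * Real.exp (ε * Real.sqrt (1 - 3 / (k : ℝ)) * t)) ∧
        (lam + 3) / (k : ℝ) = 1 - ε * Real.sqrt (1 - 3 / (k : ℝ)) := by
  have hk : (k : ℝ) ≠ 0 := by
    intro hk0
    have h1 := heq1 0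
    have h2 := heq2 0
    rw [hk0] at h1 h2
    nlinarith [hpos 0]
  set b := ((k : ℝ) - lam - 3) / k with hb
  have hkb : (k : ℝ) * b = k - lam - 3 := mul_div_cancel₀ _ hk
  have hderiv : ∀ t, deriv h t = b * h t := fun t =>
    mul_left_cancel₀ hk (by linear_combination heq2 t - h t * hkb)
  have hderiv2 : deriv (deriv h) 0 = b * (b * h 0) := by
    rw [funext hderiv, deriv_const_mul b (hd1 0), hderiv 0]
  have hkb2 : (k : ℝ) * (b * b) = k - 3 := by
    refine mul_right_cancel₀ (hpos 0).ne' ?_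
    have h1 := heq1 0
    rw [hderiv2, hderiv 0] at h1
    linear_combination h1 + h 0 * hkb
  have hb2 : b * b = 1 - 3 / (k : ℝ) := by
    field_simp
    linarith
  have hsqrt : √(1 - 3 / (k : ℝ)) = |b| := by rw [← hb2, sqrt_mul_self_eq_abs]
  obtain ⟨ε, hε, hεb⟩ := exists_sign_mul_abs_eq b
  refine ⟨by exact_mod_cast hk, hb2 ▸ mul_self_nonneg b, ε, hε, h 0, hpos 0, ?_, ?_⟩
    <;> rw [hsqrt, hεb]
  · exact eq_mul_exp_of_deriv_eq_mul hd1 hderiv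
  · rw [hb]
    field_simp
    ring

/-- If k(h'' − h') = λ h and 3h − k(h − h') = −λ h for a positive twice
differentiable h, then k ≠ 0, 1 − 3/k ≥ 0, and h(t) = c₁ exp(ε √(1 − 3/k) t) with
(λ + 3)/k = 1 − ε √(1 − 3/k) for some sign ε and constant c₁ > 0. -/
theorem superWarped_R12_ode_solution
    (k : ℤ) (h : ℝ → ℝ) (hpos : ∀ t : ℝ, 0 < h t)
    (hd1 : Differentiable ℝ h) (hd2 : Differentiable ℝ (deriv h))
    (lam : ℝ)
    (heq1 : ∀ t : ℝ, (k : ℝ) * (deriv (deriv h) t - deriv h t) = lam * h t)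
    (heq2 : ∀ t : ℝ, 3 * h t - (k : ℝ) * (h t - deriv h t) = -lam * h t) :
    k ≠ 0 ∧ 1 - 3 / (k : ℝ) ≥ 0 ∧
      ∃ ε : ℝ, (ε = 1 ∨ ε = -1) ∧ ∃ c₁ : ℝ, 0 < c₁ ∧
        (∀ t : ℝ, h t = c₁ * Real.exp (ε * Real.sqrt (1 - 3 / (k : ℝ)) * t)) ∧
        (lam + 3) / (k : ℝ) = 1 - ε * Real.sqrt (1 - 3 / (k : ℝ)) :=
  superWarped_R12_ode_solution_general k h hpos hd1 lam heq1 heq2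
end

section
/- Let k be an integer, let h : ℝ → ℝ be twice differentiable with h(t) > 0 for all t, and let λ, c₀ ∈ ℝ. Then the three equations [for all t ∈ ℝ: k·(h''(t) − h'(t)) = λ·h(t); 3·h(t) − k·(h(t) − h'(t)) = −λ·h(t); and λ·h(t)² − h''(t)·h(t) − (k−1)·h'(t)² + (2k−3)·h(t)·h'(t) − (k−3)·h(t)² = c₀] hold if and only if λ = 0, c₀ = 0, k = 3, and h is constant (there is a constant c₁ > 0 with h(t) = c₁ for all t ∈ ℝ). -/
/-- The system [k(h'' − h') = λ h; 3h − k(h − h') = −λ h;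
λ h² − h'' h − (k−1)(h')² + (2k−3)h h' − (k−3)h² = c₀] for positive twice
differentiable h holds iff λ = 0, c₀ = 0, k = 3 and h is a positive constant. -/
theorem superWarped_R12_einstein_characterization
    (k : ℤ) (h : ℝ → ℝ) (hpos : ∀ t : ℝ, 0 < h t)
    (hd1 : Differentiable ℝ h) (hd2 : Differentiable ℝ (deriv h))
    (lam c₀ : ℝ) :
    ((∀ t : ℝ, (k : ℝ) * (deriv (deriv h) t - deriv h t) = lam * h t) ∧
      (∀ t : ℝ, 3 * h t - (k : ℝ) * (h t - deriv h t) = -lam * h t) ∧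
      (∀ t : ℝ, lam * h t ^ 2 - deriv (deriv h) t * h t
        - ((k : ℝ) - 1) * deriv h t ^ 2 + (2 * (k : ℝ) - 3) * h t * deriv h t
        - ((k : ℝ) - 3) * h t ^ 2 = c₀)) ↔
      (lam = 0 ∧ c₀ = 0 ∧ k = 3 ∧ ∃ c₁ : ℝ, 0 < c₁ ∧ ∀ t : ℝ, h t = c₁) := by
  constructor
  · rintro ⟨e1, e2, e3⟩
    have hk0 : (k : ℝ) ≠ 0 := by
      intro hk
      have h1 := e1 0
      have h2 := e2 0
      rw [hk] at h1 h2
      nlinarith [hpos 0]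
    obtain ⟨a, hka⟩ : ∃ a : ℝ, (k : ℝ) * a = (k : ℝ) - 3 - lam :=
      ⟨((k : ℝ) - 3 - lam) / k, by field_simp⟩
    have ha : ∀ t, deriv h t = a * h t := by
      intro t
      refine mul_left_cancel₀ hk0 ?_
      linear_combination e2 t - h t * hka
    have hderiv : deriv h = fun t => a * h t := funext ha
    have hdd : ∀ t, deriv (deriv h) t = a * (a * h t) := by
      intro t
      rw [hderiv, deriv_const_mul a (hd1 t), ha t]
    have hne : h 0 ≠ 0 := (hpos 0).ne'
    have hlam : (k : ℝ) * (a * a - a) = lam := by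
      have h1 := e1 0
      rw [hdd 0, ha 0] at h1
      have hz : ((k : ℝ) * (a * a - a) - lam) * h 0 = 0 := by linear_combination h1
      rcases mul_eq_zero.mp hz with h' | h'
      · linarith
      · exact absurd h' hne
    have ha0 : a = 0 := by
      by_contra ha0
      set B : ℝ := lam - (k : ℝ) * a ^ 2 + (2 * (k : ℝ) - 3) * a - ((k : ℝ) - 3) with hB
      have hBh : ∀ t, B * h t ^ 2 = c₀ := by
        intro t
        have h3 := e3 t
        rw [hdd t, ha t] at h3
        linear_combination h3
      have hBc : (fun t : ℝ => B * h t ^ 2) = fun _ : ℝ => c₀ := funext hBh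
      have hd0 : deriv (fun t : ℝ => B * h t ^ 2) 0 = 0 := by
        rw [hBc]; simp
      have hcomp : deriv (fun t : ℝ => B * h t ^ 2) 0
          = B * (2 * h 0 * deriv h 0) := by
        have : HasDerivAt (fun t : ℝ => B * h t ^ 2)
            (B * (2 * h 0 ^ 1 * deriv h 0)) 0 :=
          (((hd1 0).hasDerivAt).pow 2).const_mul B
        simpa using this.deriv
      rw [hcomp, ha 0] at hd0
      have hB0 : B = 0 := by
        have hz : B * (2 * a) * h 0 ^ 2 = 0 := by linear_combination hd0
        rcases mul_eq_zero.mp hz with h' | h'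
        · rcases mul_eq_zero.mp h' with h'' | h''
          · exact h''
          · exact absurd h'' (by simpa using ha0)
        · exact absurd h' (pow_ne_zero 2 hne)
      have h1 : ((k : ℝ) - 3) * (a - 1) = 0 := by linear_combination hlam + hB0
      have h2 : (k : ℝ) * a ^ 2 = (k : ℝ) - 3 := by linear_combination hlam + hka
      rcases mul_eq_zero.mp h1 with h' | h'
      · have hK3 : (k : ℝ) = 3 := by linarith
        rw [hK3] at h2
        have : a ^ 2 = 0 := by linarith
        exact ha0 (pow_eq_zero_iff (n := 2) (by norm_num) |>.mp this)
      · have haone : a = 1 := by linarith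
        rw [haone] at h2
        linarith
    subst ha0
    have hlam0 : lam = 0 := by linarith [hlam]
    have hK3 : (k : ℝ) = 3 := by
      rw [hlam0] at hka; linarith
    have hk3 : k = 3 := by exact_mod_cast hK3
    have hc0 : c₀ = 0 := by
      have h3 := e3 0
      rw [hdd 0, ha 0, hlam0, hK3] at h3
      linarith [h3]
    refine ⟨hlam0, hc0, hk3, h 0, hpos 0, fun t => ?_⟩
    have hd0 : ∀ t, deriv h t = 0 := by
      intro t; rw [ha t]; ring
    exact is_const_of_deriv_eq_zero hd1 hd0 t 0
  · rintro ⟨hl, hc, hk, c₁, hc₁, hh⟩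
    have hhe : h = fun _ => c₁ := funext hh
    have hd : ∀ t, deriv h t = 0 := by
      intro t; rw [hhe]; simp
    have hdd : ∀ t, deriv (deriv h) t = 0 := by
      intro t
      have : deriv h = fun _ : ℝ => (0 : ℝ) := funext hd
      rw [this]; simp
    subst hk hl hc
    refine ⟨fun t => ?_, fun t => ?_, fun t => ?_⟩ <;>
      simp [hd t, hdd t, hh t] <;> ring
end
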